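/- arXiv:2210.12680 — 6 statements merged into one kernel-verified Lean document; each statement's English description precedes it below -/
import Mathlib

section
/- For all natural numbers a, b and t, (t+a)!/t! · (t+b)!/t! = Σ_{c=max(a,b)}^{a+b} (-1)^{a+b-c} · a! b! / ((a+b-c)! (c-a)! (c-b)!) · (t+c)!/t!, i.e. (t+1)_a (t+1)_b = Σ_{c=max(a,b)}^{a+b} (-1)^{a+b-c} · a! b! / ((a+b-c)! (c-a)! (c-b)!) · (t+1)_c, where (t+1)_n = (t+1)(t+2)⋯(t+n). -/
def rise (t : ℕ) (c : ℕ) : ℚ := ∏ i ∈ Finset.range c, ((t : ℚ) + i + 1)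

def K (a b c : ℕ) : ℚ :=
  if a ≤ c ∧ b ≤ c ∧ c ≤ a + b then
    (-1 : ℚ) ^ (a + b - c) * ((a.factorial * b.factorial : ℕ) : ℚ) /
      (((a + b - c).factorial * (c - a).factorial * (c - b).factorial : ℕ) : ℚ)
  else 0

lemma K_rec (a b d : ℕ) :
    K a (b+1) (d+1) = K a b d + ((b : ℚ) - (d+1)) * K a b (d+1) := by
  unfold K
  rcases lt_or_ge d b with hbd | hbd
  · rw [if_neg (by omega), if_neg (by omega)]
    rcases eq_or_lt_of_le (Nat.succ_le_of_lt hbd) with h | h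
    · have hc : ((b : ℚ) - (d+1)) = 0 := by
        have : b = d + 1 := by omega
        simp [this]
      simp [hc]
    · rw [if_neg (by omega)]; ring
  · rcases lt_or_ge (a+b) d with h | h
    · rw [if_neg (by omega), if_neg (by omega), if_neg (by omega)]; ring
    · rcases lt_or_ge (d+1) a with h2 | h2
      · rw [if_neg (by omega), if_neg (by omega), if_neg (by omega)]; ring
      · rw [if_pos (by omega)]
        rcases eq_or_lt_of_le h2 with ha | ha
        · -- a = d + 1
          subst ha
          rw [if_neg (by omega), if_pos (by omega)]
          obtain ⟨f, hf⟩ : ∃ f, d = b + f := ⟨d - b, by omega⟩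
          subst hf
          have h1 : (b+f+1) + (b+1) - (b+f+1) = b + 1 := by omega
          have h2' : (b+f+1) + b - (b+f+1) = b := by omega
          have h3 : b + f + 1 - (b+f+1) = 0 := by omega
          have h4 : b + f + 1 - (b+1) = f := by omega
          have h5 : b + f + 1 - b = f + 1 := by omega
          rw [h1, h2', h3, h4, h5]
          push_cast [Nat.factorial_succ]
          have hb : (b.factorial : ℚ) ≠ 0 := by exact_mod_cast b.factorial_ne_zero
          have hff : (f.factorial : ℚ) ≠ 0 := by exact_mod_cast f.factorial_ne_zero
          field_simp
          ring
        · -- a ≤ d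
          rw [if_pos (by omega)]
          rcases eq_or_lt_of_le h with hd | hd
          · -- d = a + b
            subst hd
            rw [if_neg (by omega)]
            have h1 : a + (b+1) - (a+b+1) = 0 := by omega
            have h2' : a + b - (a+b) = 0 := by omega
            have h3 : a + b + 1 - a = b + 1 := by omega
            have h4 : a + b - a = b := by omega
            have h5 : a + b + 1 - (b+1) = a := by omega
            have h6 : a + b - b = a := by omega
            rw [h1, h2', h3, h4, h5, h6]
            push_cast [Nat.factorial_succ]
            have haq : (a.factorial : ℚ) ≠ 0 := by exact_mod_cast a.factorial_ne_zero
            have hbq : (b.factorial : ℚ) ≠ 0 := by exact_mod_cast b.factorial_ne_zero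
            field_simp
            ring
          · -- interior: a ≤ d, b ≤ d, d + 1 ≤ a + b
            rw [if_pos (by omega)]
            obtain ⟨e, he⟩ : ∃ e, d = a + e := ⟨d - a, by omega⟩
            subst he
            obtain ⟨g, hg⟩ : ∃ g, b = e + g + 1 := ⟨b - e - 1, by omega⟩
            subst hg
            obtain ⟨f, hf⟩ : ∃ f, a = f + g + 1 := ⟨a - g - 1, by omega⟩
            subst hf
            have h1 : (f+g+1) + (e+g+1+1) - ((f+g+1)+e+1) = g + 1 := by omega
            have h2' : (f+g+1) + (e+g+1) - ((f+g+1)+e) = g + 1 := by omega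
            have h3 : (f+g+1) + (e+g+1) - ((f+g+1)+e+1) = g := by omega
            have h4 : (f+g+1)+e+1 - (f+g+1) = e + 1 := by omega
            have h5 : (f+g+1)+e - (f+g+1) = e := by omega
            have h6 : (f+g+1)+e+1 - (e+g+1+1) = f := by omega
            have h7 : (f+g+1)+e - (e+g+1) = f := by omega
            have h8 : (f+g+1)+e+1 - (e+g+1) = f + 1 := by omega
            rw [h1, h2', h3, h4, h5, h6, h7, h8]
            push_cast [Nat.factorial_succ]
            have heq : (e.factorial : ℚ) ≠ 0 := by exact_mod_cast e.factorial_ne_zero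
            have hfq : (f.factorial : ℚ) ≠ 0 := by exact_mod_cast f.factorial_ne_zero
            have hgq : (g.factorial : ℚ) ≠ 0 := by exact_mod_cast g.factorial_ne_zero
            have h9 : ((e+g+1).factorial : ℚ) ≠ 0 := by exact_mod_cast (e+g+1).factorial_ne_zero
            have h10 : ((f+g+1).factorial : ℚ) ≠ 0 := by exact_mod_cast (f+g+1).factorial_ne_zero
            field_simp
            ring


lemma rise_succ (t c : ℕ) : rise t (c+1) = rise t c * ((t:ℚ) + c + 1) := by
  simp [rise, Finset.prod_range_succ]

lemma main_lemma (t a : ℕ) : ∀ b, rise t a * rise t b =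
    ∑ c ∈ Finset.range (a+b+2), K a b c * rise t c := by
  intro b
  induction b with
  | zero =>
    have h0 : rise t 0 = 1 := by simp [rise]
    have hKa : K a 0 a = 1 := by
      unfold K
      rw [if_pos (by omega)]
      have hfa : (a.factorial : ℚ) ≠ 0 := by exact_mod_cast a.factorial_ne_zero
      simp [div_self hfa]
    rw [h0, mul_one, Finset.sum_eq_single_of_mem a (Finset.mem_range.2 (by omega))
      (fun c _ hca => by
        have hz : K a 0 c = 0 := by unfold K; exact if_neg (by omega)
        rw [hz, zero_mul]), hKa, one_mul]
  | succ b ih =>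
    have hK0 : K a (b+1) 0 = 0 := by unfold K; rw [if_neg (by omega)]
    have hKtop : K a b (a+b+2) = 0 := by unfold K; rw [if_neg (by omega)]
    have hG0 : (b:ℚ) * K a b 0 * rise t 0 = 0 := by
      by_cases hb : b = 0
      · simp [hb]
      · have : K a b 0 = 0 := by unfold K; rw [if_neg (by omega)]
        simp [this]
    calc rise t a * rise t (b+1)
        = (rise t a * rise t b) * ((t:ℚ) + b + 1) := by
          rw [rise_succ, mul_assoc]
      _ = ∑ c ∈ Finset.range (a+b+2), K a b c * rise t c * ((t:ℚ) + b + 1) := by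
          rw [ih, Finset.sum_mul]
      _ = ∑ c ∈ Finset.range (a+b+2),
            (K a b c * rise t (c+1) + ((b:ℚ) - c) * K a b c * rise t c) := by
          refine Finset.sum_congr rfl fun c _ => ?_
          rw [rise_succ]
          ring
      _ = (∑ c ∈ Finset.range (a+b+2), K a b c * rise t (c+1))
            + ∑ c ∈ Finset.range (a+b+2), ((b:ℚ) - c) * K a b c * rise t c := by
          rw [Finset.sum_add_distrib]
      _ = (∑ c ∈ Finset.range (a+b+2), K a b c * rise t (c+1))
            + ∑ c ∈ Finset.range (a+b+2), ((b:ℚ) - (c+1)) * K a b (c+1) * rise t (c+1) := by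
          congr 1
          have e1 := Finset.sum_range_succ' (fun c : ℕ => ((b:ℚ) - c) * K a b c * rise t c) (a+b+2)
          have e2 := Finset.sum_range_succ (fun c : ℕ => ((b:ℚ) - c) * K a b c * rise t c) (a+b+2)
          simp only [hKtop, mul_zero, zero_mul, add_zero] at e2
          simp only [Nat.cast_zero, sub_zero] at e1
          rw [hG0, add_zero] at e1
          rw [e2] at e1
          rw [e1]
          refine Finset.sum_congr rfl fun c _ => ?_
          push_cast
          ring
      _ = ∑ c ∈ Finset.range (a+b+2), K a (b+1) (c+1) * rise t (c+1) := by
          rw [← Finset.sum_add_distrib]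
          refine Finset.sum_congr rfl fun c _ => ?_
          rw [K_rec]
          push_cast
          ring
      _ = ∑ c ∈ Finset.range (a+(b+1)+2), K a (b+1) c * rise t c := by
          have h3 : a+(b+1)+2 = (a+b+2)+1 := by omega
          rw [h3, Finset.sum_range_succ' (fun c => K a (b+1) c * rise t c) (a+b+2)]
          rw [hK0, zero_mul, add_zero]

/-- Expansion of a product of two rising factorials:
`(t+1)_a (t+1)_b = Σ_{c=max(a,b)}^{a+b} (-1)^{a+b-c} a! b! / ((a+b-c)!(c-a)!(c-b)!) · (t+1)_c`. -/
theorem stmt_3 (t a b : ℕ) :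
    rise t a * rise t b =
      ∑ c ∈ Finset.Icc (max a b) (a + b),
        (-1 : ℚ) ^ (a + b - c) *
          ((a.factorial * b.factorial : ℕ) : ℚ) /
            (((a + b - c).factorial * (c - a).factorial * (c - b).factorial : ℕ) : ℚ) *
          rise t c := by
  rw [main_lemma t a b]
  rw [← Finset.sum_subset (s₁ := Finset.Icc (max a b) (a + b))
    (fun c hc => Finset.mem_range.2 (by simp [Finset.mem_Icc] at hc; omega))
    (fun c hc hnc => by
      have hz : K a b c = 0 := by
        unfold K
        refine if_neg ?_
        simp [Finset.mem_Icc] at hnc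
        simp [Finset.mem_range] at hc
        omega
      rw [hz, zero_mul])]
  refine Finset.sum_congr rfl fun c hc => ?_
  simp only [Finset.mem_Icc] at hc
  unfold K
  rw [if_pos (by omega)]
end

section
/- For nonnegative integers a, b and p, the p-fold backward difference of the polynomial f(t) = ((t+a)!/t!)·((t+b)!/t!) (interpreted as the polynomial (t+1)⋯(t+a)·(t+1)⋯(t+b)) evaluated at t = -1 vanishes when p < max(a,b) or p > a+b. -/
/-- The rising factorial `(t+1)_a = (t+1)(t+2)⋯(t+a)` for an integer `t`. -/
def riseZ (t : ℤ) (a : ℕ) : ℤ := ∏ i ∈ Finset.range a, (t + i + 1)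

/-- The backward difference operator `(O f)(t) = f(t) - f(t-1)`. -/
def bdiff (f : ℤ → ℤ) : ℤ → ℤ := fun t => f t - f (t - 1)

lemma bdiff_window_zero : ∀ (p : ℕ) (f : ℤ → ℤ) (x : ℤ),
    (∀ k : ℕ, k ≤ p → f (x - k) = 0) → bdiff^[p] f x = 0 := by
  intro p
  induction p with
  | zero => intro f x h; simpa using h 0 le_rfl
  | succ p ih =>
    intro f x h
    rw [Function.iterate_succ_apply]
    apply ih
    intro k hk
    have h1 := h k (le_trans hk (Nat.le_succ p))
    have h2 := h (k + 1) (Nat.succ_le_succ hk)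
    simp only [bdiff]
    have : x - (k : ℤ) - 1 = x - ((k : ℕ) + 1 : ℕ) := by push_cast; ring
    rw [this, h1, h2, sub_zero]

open Polynomial

lemma bdiff_eval (P : ℤ[X]) :
    bdiff (fun t => P.eval t) = fun t => (P - P.comp (X - C 1)).eval t := by
  funext t
  simp [bdiff, eval_comp]

lemma deg_drop (P : ℤ[X]) :
    P - P.comp (X - C 1) = 0 ∨ (P - P.comp (X - C 1)).natDegree < P.natDegree := by
  by_cases h0 : P.natDegree = 0
  · left
    obtain ⟨c, rfl⟩ := Polynomial.natDegree_eq_zero.mp h0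
    simp
  · right
    have hP : P ≠ 0 := fun h => h0 (by simp [h])
    have hq : (X - C (1:ℤ)).natDegree = 1 := natDegree_X_sub_C 1
    have hlc : (P.comp (X - C 1)).leadingCoeff = P.leadingCoeff := by
      rw [leadingCoeff_comp (by rw [hq]; norm_num), leadingCoeff_X_sub_C, one_pow, mul_one]
    have hQ0 : P.comp (X - C 1) ≠ 0 := by
      intro h
      apply hP
      have := hlc
      rw [h, leadingCoeff_zero] at this
      exact leadingCoeff_eq_zero.mp this.symm
    have hnd : (P.comp (X - C 1)).natDegree = P.natDegree := by
      rw [natDegree_comp, hq, mul_one]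
    have hdeg : (P.comp (X - C 1)).degree = P.degree := by
      rw [degree_eq_natDegree hQ0, degree_eq_natDegree hP, hnd]
    have hlt : (P - P.comp (X - C 1)).degree < P.degree :=
      degree_sub_lt hdeg.symm hP hlc.symm
    by_cases hz : P - P.comp (X - C 1) = 0
    · rw [hz]
      simpa using Nat.pos_of_ne_zero h0
    · exact natDegree_lt_natDegree hz (by rwa [degree_eq_natDegree hP] at hlt ⊢)

lemma bdiff_iter_eval_zero : ∀ (p : ℕ) (P : ℤ[X]), P.natDegree < p →
    ∀ t, bdiff^[p] (fun t => P.eval t) t = 0 := by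
  intro p
  induction p with
  | zero => intro P hP; omega
  | succ p ih =>
    intro P hP t
    rw [Function.iterate_succ_apply, bdiff_eval]
    rcases deg_drop P with h | h
    · rw [h]
      simp only [eval_zero]
      have : bdiff (fun _ => (0:ℤ)) = fun _ => 0 := by funext s; simp [bdiff]
      rw [Function.iterate_fixed this]
    · exact ih _ (by omega) t

/-- The `p`-fold backward difference of `c_t^{a,b} = (t+1)_a (t+1)_b`, evaluated at
`t = -1`, vanishes when `p < max(a,b)` or `p > a+b`. -/
theorem stmt_6 (a b p : ℕ) (h : p < max a b ∨ a + b < p) :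
    (bdiff^[p] (fun t => riseZ t a * riseZ t b)) (-1) = 0 := by
  rcases h with h | h
  · apply bdiff_window_zero
    intro k hk
    have hk' : k < max a b := lt_of_le_of_lt hk h
    have key : ∀ m : ℕ, k < m → riseZ (-1 - (k:ℤ)) m = 0 := by
      intro m hm
      unfold riseZ
      apply Finset.prod_eq_zero (Finset.mem_range.mpr hm)
      ring_nf
    rcases lt_max_iff.mp hk' with hm | hm
    · simp [key a hm]
    · simp [key b hm]
  · set P : ℤ[X] := (∏ i ∈ Finset.range a, (X + C (i:ℤ) + C 1)) *
      (∏ i ∈ Finset.range b, (X + C (i:ℤ) + C 1)) with hPdef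
    have heq : (fun t : ℤ => riseZ t a * riseZ t b) = fun t => P.eval t := by
      funext t
      simp [riseZ, hPdef, eval_prod]
    rw [heq]
    apply bdiff_iter_eval_zero
    have h1 : ∀ n : ℕ, (∏ i ∈ Finset.range n, (X + C (i:ℤ) + C 1)).natDegree ≤ n := by
      intro n
      calc (∏ i ∈ Finset.range n, (X + C (i:ℤ) + C 1)).natDegree
          ≤ ∑ i ∈ Finset.range n, (X + C (i:ℤ) + C 1).natDegree :=
            natDegree_prod_le _ _
        _ ≤ ∑ i ∈ Finset.range n, 1 := by
            apply Finset.sum_le_sum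
            intro i _
            have : X + C (i:ℤ) + C 1 = X + C ((i:ℤ) + 1) := by rw [C_add]; ring
            rw [this, natDegree_X_add_C]
        _ = n := by simp
    calc P.natDegree ≤ _ + _ := natDegree_mul_le
      _ ≤ a + b := add_le_add (h1 a) (h1 b)
      _ < p := h
end

section
/- Let b ∈ B with b = b₊ - b₋ where b₊, b₋ ∈ Z^N_{≥0} have disjoint supports. Then the Γ-series F_γ(z) = Σ_{x ∈ γ+B} z^x/x! satisfies the binomial (GKZ) equation (∂/∂z)^{b₊} F_γ = (∂/∂z)^{b₋} F_γ, where (∂/∂z)^{v} denotes the iterated partial derivative of multi-order v. -/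
/-!
Differentiating `z^d / d!` by `∂^v` gives `z^(d - v) / (d - v)!` when `v ≤ d`, and `0` otherwise.
Hence the coefficient of `z^m` in `∂^v F_γ` is `1 / m!` if `m + v ∈ γ + B` and `0` otherwise.
Since `(m + b₊) - (m + b₋) = b ∈ B`, the conditions for `v = b₊` and `v = b₋` agree.
-/

open scoped Classical

/-- The Γ-series `F_γ(z) = Σ_{x ∈ γ+B} z^x/x!` (terms with a negative exponent
coordinate vanish), as a polynomial: it is assumed (hypothesis `h`) that only finitely
many exponent vectors `d ∈ ℕ^N` satisfy `d - γ ∈ B`. -/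
noncomputable def gpoly {N : ℕ} (B : AddSubgroup (Fin N → ℤ)) (γ : Fin N → ℤ)
    (h : {d : Fin N →₀ ℕ | (fun i => (d i : ℤ)) - γ ∈ B}.Finite) :
    MvPolynomial (Fin N) ℚ :=
  ∑ d ∈ h.toFinset, ((∏ i, (d i).factorial : ℕ) : ℚ)⁻¹ • MvPolynomial.monomial d (1 : ℚ)

/-- The iterated partial derivative `(∂/∂z)^v = Π_i (∂/∂z_i)^{v_i}` of multi-order `v`. -/
noncomputable def pdPow {N : ℕ} (v : Fin N → ℕ) (p : MvPolynomial (Fin N) ℚ) :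
    MvPolynomial (Fin N) ℚ :=
  (List.finRange N).foldr (fun i q => (fun r => MvPolynomial.pderiv i r)^[v i] q) p

open MvPolynomial

section IteratedPDeriv

variable {R σ : Type*} [CommSemiring R]

theorem coeff_iterate_pderiv [DecidableEq σ] (i : σ) (k : ℕ) (p : MvPolynomial σ R)
    (m : σ →₀ ℕ) :
    coeff m ((fun q => pderiv i q)^[k] p) =
      coeff (m + Finsupp.single i k) p * (m i + k).descFactorial k := by
  induction k generalizing m with
  | zero => simp
  | succ k ih =>
    rw [Function.iterate_succ_apply', coeff_pderiv, ih, Finsupp.add_apply,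
      Finsupp.single_eq_same, add_assoc, ← Finsupp.single_add, add_comm 1 k, mul_assoc,
      ← add_assoc, add_right_comm, Nat.descFactorial_succ, show m i + k + 1 - k = m i + 1 by omega]
    push_cast
    ring

theorem coeff_foldr_iterate_pderiv [DecidableEq σ] (v : σ → ℕ) (l : List σ) (hl : l.Nodup)
    (p : MvPolynomial σ R) (m : σ →₀ ℕ) :
    coeff m (l.foldr (fun i q => (fun r => pderiv i r)^[v i] q) p) =
      coeff (m + ∑ i ∈ l.toFinset, Finsupp.single i (v i)) p *
        ∏ i ∈ l.toFinset, ((m i + v i).descFactorial (v i) : R) := by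
  induction l generalizing m with
  | nil => simp
  | cons i l ih =>
    obtain ⟨hi, hl⟩ := List.nodup_cons.mp hl
    have hi' : i ∉ l.toFinset := by simpa using hi
    have hm : ∀ j ∈ l.toFinset, (m + Finsupp.single i (v i)) j = m j := fun j hj => by
      simp [show i ≠ j by rintro rfl; exact hi' hj]
    rw [List.foldr_cons, coeff_iterate_pderiv, ih hl, List.toFinset_cons,
      Finset.sum_insert hi', Finset.prod_insert hi', Finset.prod_congr rfl fun j hj => by
        rw [hm j hj], add_assoc]
    ring

end IteratedPDeriv

theorem prod_factorial_add {ι : Type*} (s : Finset ι) (m v : ι → ℕ) :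
    ∏ i ∈ s, (m i + v i).factorial =
      (∏ i ∈ s, (m i).factorial) * ∏ i ∈ s, (m i + v i).descFactorial (v i) := by
  rw [← Finset.prod_mul_distrib]
  refine Finset.prod_congr rfl fun i _ => ?_
  simpa using (Nat.factorial_mul_descFactorial (Nat.le_add_left (v i) (m i))).symm

section GammaSeries

variable {N : ℕ}

theorem coeff_pdPow (v : Fin N → ℕ) (p : MvPolynomial (Fin N) ℚ) (m : Fin N →₀ ℕ) :
    coeff m (pdPow v p) =
      coeff (m + Finsupp.equivFunOnFinite.symm v) p *
        ∏ i, ((m i + v i).descFactorial (v i) : ℚ) := by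
  have hsum : ∑ i ∈ (List.finRange N).toFinset, Finsupp.single i (v i) =
      Finsupp.equivFunOnFinite.symm v := by
    ext j
    simp [Finsupp.finsetSum_apply, Finsupp.single_apply]
  rw [pdPow, coeff_foldr_iterate_pderiv v _ (List.nodup_finRange N), hsum, List.toFinset_finRange]

theorem coeff_gpoly (B : AddSubgroup (Fin N → ℤ)) (γ : Fin N → ℤ)
    (h : {d : Fin N →₀ ℕ | (fun i => (d i : ℤ)) - γ ∈ B}.Finite) (d : Fin N →₀ ℕ) :
    coeff d (gpoly B γ h) =
      if (fun i => (d i : ℤ)) - γ ∈ B then ((∏ i, (d i).factorial : ℕ) : ℚ)⁻¹ else 0 := by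
  simp only [gpoly, coeff_sum, coeff_smul, coeff_monomial, smul_eq_mul, mul_ite, mul_one,
    mul_zero]
  rw [Finset.sum_ite_eq']
  simp only [Set.Finite.mem_toFinset, Set.mem_ofPred_eq]

theorem coeff_pdPow_gpoly (B : AddSubgroup (Fin N → ℤ)) (γ : Fin N → ℤ)
    (h : {d : Fin N →₀ ℕ | (fun i => (d i : ℤ)) - γ ∈ B}.Finite)
    (v : Fin N → ℕ) (m : Fin N →₀ ℕ) :
    coeff m (pdPow v (gpoly B γ h)) =
      if (fun i => ((m i + v i : ℕ) : ℤ)) - γ ∈ B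
        then ((∏ i, (m i).factorial : ℕ) : ℚ)⁻¹ else 0 := by
  rw [coeff_pdPow, coeff_gpoly]
  simp only [Finsupp.add_apply, Finsupp.coe_equivFunOnFinite_symm, Nat.cast_add]
  split_ifs
  · rw [prod_factorial_add]
    have : ∏ i, ((m i + v i).descFactorial (v i) : ℚ) ≠ 0 :=
      Finset.prod_ne_zero_iff.mpr fun i _ => by simp [Nat.descFactorial_eq_zero_iff_lt]
    push_cast
    field_simp
  · exact zero_mul _

end GammaSeries

theorem stmt_10_general (N : ℕ) (B : AddSubgroup (Fin N → ℤ))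
    (h : ∀ γ : Fin N → ℤ, {d : Fin N →₀ ℕ | (fun i => (d i : ℤ)) - γ ∈ B}.Finite)
    (γ : Fin N → ℤ) (bp bm : Fin N → ℕ)
    (hb : (fun i => (bp i : ℤ) - (bm i : ℤ)) ∈ B) :
    pdPow bp (gpoly B γ (h γ)) = pdPow bm (gpoly B γ (h γ)) := by
  ext m
  have hshift : (fun i => ((m i + bp i : ℕ) : ℤ)) - γ =
      (fun i => (bp i : ℤ) - (bm i : ℤ)) + ((fun i => ((m i + bm i : ℕ) : ℤ)) - γ) := by
    ext i
    simp only [Pi.add_apply, Pi.sub_apply]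
    push_cast
    ring
  simp only [coeff_pdPow_gpoly, hshift, B.add_mem_cancel_left hb]

/-- If `b = b₊ - b₋ ∈ B` with `b₊, b₋ ∈ ℕ^N` of disjoint supports, then the Γ-series
satisfies the binomial (GKZ) equation `(∂/∂z)^{b₊} F_γ = (∂/∂z)^{b₋} F_γ`. -/
theorem stmt_10 (N : ℕ) (B : AddSubgroup (Fin N → ℤ))
    (h : ∀ γ : Fin N → ℤ, {d : Fin N →₀ ℕ | (fun i => (d i : ℤ)) - γ ∈ B}.Finite)
    (γ : Fin N → ℤ) (bp bm : Fin N → ℕ)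
    (hb : (fun i => (bp i : ℤ) - (bm i : ℤ)) ∈ B)
    (hdisj : ∀ i, bp i = 0 ∨ bm i = 0) :
    pdPow bp (gpoly B γ (h γ)) = pdPow bm (gpoly B γ (h γ)) :=
  stmt_10_general N B h γ bp bm hb
end

section
/- For γ = (-a₁, -a₂, b₁-1, 0) ∈ Z^4 and B = Z·(-1,-1,1,1) ⊂ Z^4, the Γ-series F_γ(z₁,z₂,z₃,z₄) = Σ_{n ∈ Z} z^{γ + n(-1,-1,1,1)}/(γ + n(-1,-1,1,1))! equals c · z₁^{-a₁} z₂^{-a₂} z₃^{b₁-1} · Σ_{n ≥ 0} [(a₁)_n (a₂)_n / ((b₁)_n n!)] (z₃z₄/(z₁z₂))^n with c = 1/(Γ(1-a₁)Γ(1-a₂)Γ(b₁)), whenever the parameters are such that both sides are finite sums (e.g. a₁, a₂ nonpositive integers, b₁ a positive integer). -/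
/-!
Writing `a₁ = -A`, `a₂ = -B`, `b₁ = c + 1` with `A B c : ℕ`, the two sums agree term by term:
`(-A)_n (-B)_n = A^{(n)} B^{(n)}` (falling factorials, the signs `(-1)^n` cancel),
`(c + 1)_n = (c + n)! / c!`, and `(A - n)! = A! / A^{(n)}` for `n ≤ A`.
-/

open Nat

theorem ascPochhammer_eval_neg_mul_eval_neg {R : Type*} [CommRing R] (a b n : ℕ) :
    (ascPochhammer R n).eval (-(a : R)) * (ascPochhammer R n).eval (-(b : R)) =
      a.descFactorial n * b.descFactorial n := by
  simp only [ascPochhammer_eval_neg_eq_descPochhammer, descPochhammer_eval_eq_descFactorial]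
  rw [mul_mul_mul_comm, ← mul_pow, neg_one_mul, neg_neg, one_pow, one_mul]

theorem ascPochhammer_eval_natCast_add_one {R : Type*} [Semiring R] (c n : ℕ) :
    (ascPochhammer R n).eval ((c : R) + 1) = (c + 1).ascFactorial n := by
  exact_mod_cast ascPochhammer_nat_eq_natCast_ascFactorial R (c + 1) n

theorem gammaSeries_term_eq_hypergeometric_term {K : Type*} [Field K] [CharZero K]
    (a b c n : ℕ) {x y u v : K} (hx : x ≠ 0) (hy : y ≠ 0) :
    x ^ a * y ^ b * u ^ (c + n) * v ^ n / ((a ! * b ! * (c + n)! * n ! : ℕ) : K) =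
      (((a + n)! * (b + n)! * c ! : ℕ) : K)⁻¹ * (x ^ (a + n) * y ^ (b + n) * u ^ c) *
        (((a + n).descFactorial n * (b + n).descFactorial n : ℕ) : K) /
          (((c + 1).ascFactorial n : ℕ) * (n ! : K)) * (u * v / (x * y)) ^ n := by
  have hA := Nat.factorial_mul_descFactorial (Nat.le_add_left n a)
  have hB := Nat.factorial_mul_descFactorial (Nat.le_add_left n b)
  rw [Nat.add_sub_cancel] at hA hB
  rw [← hA, ← hB, ← Nat.factorial_mul_ascFactorial c n]
  have : ((a + n).descFactorial n : K) ≠ 0 := by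
    exact_mod_cast (Nat.descFactorial_pos.mpr (Nat.le_add_left n a)).ne'
  have : ((b + n).descFactorial n : K) ≠ 0 := by
    exact_mod_cast (Nat.descFactorial_pos.mpr (Nat.le_add_left n b)).ne'
  have : ((c + 1).ascFactorial n : K) ≠ 0 := by
    exact_mod_cast (Nat.ascFactorial_pos c n).ne'
  rw [div_pow, mul_pow, mul_pow, pow_add x, pow_add y]
  push_cast
  field_simp
  ring

/-- For `γ = (-a₁, -a₂, b₁-1, 0)` and `B = ℤ·(-1,-1,1,1)`, the Γ-series
`F_γ(z) = Σ_n z^{γ + n(-1,-1,1,1)}/(γ + n(-1,-1,1,1))!` equals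
`c · z₁^{-a₁} z₂^{-a₂} z₃^{b₁-1} · F_{2,1}(a₁,a₂,b₁; z₃z₄/(z₁z₂))` with
`c = 1/(Γ(1-a₁)Γ(1-a₂)Γ(b₁))`, when `a₁, a₂` are nonpositive integers and `b₁` is a
positive integer (so that both sides are finite sums; the nonzero terms of either sum
have index `0 ≤ n ≤ min(-a₁, -a₂)`). -/
theorem stmt_11 (a₁ a₂ b₁ : ℤ) (ha₁ : a₁ ≤ 0) (ha₂ : a₂ ≤ 0) (hb₁ : 1 ≤ b₁)
    (z : Fin 4 → ℂ) (hz : ∀ i, z i ≠ 0) :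
    ∑ n ∈ Finset.range (min (-a₁).toNat (-a₂).toNat + 1),
        z 0 ^ (-a₁ - (n : ℤ)) * z 1 ^ (-a₂ - (n : ℤ)) * z 2 ^ (b₁ - 1 + (n : ℤ)) *
            z 3 ^ (n : ℕ) /
          (((-a₁ - (n : ℤ)).toNat.factorial * (-a₂ - (n : ℤ)).toNat.factorial *
              (b₁ - 1 + (n : ℤ)).toNat.factorial * n.factorial : ℕ) : ℂ) =
      (((-a₁).toNat.factorial * (-a₂).toNat.factorial * (b₁ - 1).toNat.factorial : ℕ) : ℂ)⁻¹ *
        (z 0 ^ (-a₁) * z 1 ^ (-a₂) * z 2 ^ (b₁ - 1)) *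
        ∑ n ∈ Finset.range (min (-a₁).toNat (-a₂).toNat + 1),
          (((ascPochhammer ℤ n).eval a₁ * (ascPochhammer ℤ n).eval a₂ : ℤ) : ℂ) /
              ((((ascPochhammer ℤ n).eval b₁ : ℤ) : ℂ) * (n.factorial : ℕ)) *
            (z 2 * z 3 / (z 0 * z 1)) ^ n := by
  obtain ⟨A, rfl⟩ : ∃ A : ℕ, a₁ = -(A : ℤ) := ⟨(-a₁).toNat, by omega⟩
  obtain ⟨B, rfl⟩ : ∃ B : ℕ, a₂ = -(B : ℤ) := ⟨(-a₂).toNat, by omega⟩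
  obtain ⟨c, rfl⟩ : ∃ c : ℕ, b₁ = c + 1 := ⟨(b₁ - 1).toNat, by omega⟩
  simp only [neg_neg, Int.toNat_natCast, add_sub_cancel_right, Finset.mul_sum]
  refine Finset.sum_congr rfl fun n hn => ?_
  obtain ⟨hnA, hnB⟩ : n ≤ A ∧ n ≤ B := by
    simp only [Finset.mem_range] at hn
    omega
  obtain ⟨a, rfl⟩ := Nat.exists_eq_add_of_le' hnA
  obtain ⟨b, rfl⟩ := Nat.exists_eq_add_of_le' hnB
  rw [ascPochhammer_eval_neg_mul_eval_neg, ascPochhammer_eval_natCast_add_one,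
    show ((a + n : ℕ) : ℤ) - n = a by omega, show ((b + n : ℕ) : ℤ) - n = b by omega,
    ← Nat.cast_add c n]
  simp only [Int.toNat_natCast, zpow_natCast]
  rw [gammaSeries_term_eq_hypergeometric_term a b c n (hz 0) (hz 1)]
  push_cast
  ring
end

section
/- Let χ_p^q ∈ Z^N (N = 2^n - 2, coordinates indexed by proper nonempty subsets X ⊂ {1,...,n}) be defined by (χ_p^q)_X = 1 if X contains at least p indices that are ≤ q, and 0 otherwise. For fixed i < j < x and X ⊂ {j+2,...,n} \ {x}, let v = e_{{1..i-1}∪{i}∪X} - e_{{1..i-1}∪{j}∪X} - e_{{1..i-1}∪{i,x}∪X} + e_{{1..i-1}∪{j,x}∪X}. Then ⟨χ_p^q, v⟩ = 0 for all 1 ≤ p ≤ q ≤ n. -/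
/-!
Write `A = {1..i-1} ∪ X` and let `c(S)` count the elements of `S` below `q`. The value of
`χ_p^q` on a set depends only on `c`, and `c(A ∪ {y}) = c(A) + [y < q]` for `y ∉ A`.
Since `i < j < x`, either `x ≥ q`, and then adding `x` does not change `c`, so the four
terms cancel in pairs; or `x < q`, and then `i, j < q` as well, so `A ∪ {i}` and `A ∪ {j}`
(with or without `x`) have the same count.
-/

/-- The set of column indices `{1, …, i-1}` (0-based: all indices `< i`). -/
def lowSet {n : ℕ} (i : Fin n) : Finset (Fin n) :=
  Finset.univ.filter (fun y => y < i)

open Finset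

section CountDifference

variable {α : Type*} [DecidableEq α] (P : α → Prop) [DecidablePred P]

lemma card_filter_insert_of_notMem {a : α} {s : Finset α} (ha : a ∉ s) :
    #((insert a s).filter P) = #(s.filter P) + if P a then 1 else 0 := by
  rw [filter_insert]
  split_ifs
  · exact card_insert_of_notMem fun h => ha (mem_of_mem_filter a h)
  · rfl

theorem sub_sub_add_eq_zero_of_card_filter (f : ℕ → ℤ) {s : Finset α} {a b c : α}
    (ha : a ∉ s) (hb : b ∉ s) (hc : c ∉ s) (hac : a ≠ c) (hbc : b ≠ c)
    (hab : P c → (P a ↔ P b)) :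
    f #((insert a s).filter P) - f #((insert b s).filter P)
      - f #((insert a (insert c s)).filter P) + f #((insert b (insert c s)).filter P) = 0 := by
  have hca : a ∉ insert c s := by simp [hac, ha]
  have hcb : b ∉ insert c s := by simp [hbc, hb]
  rw [card_filter_insert_of_notMem P ha, card_filter_insert_of_notMem P hb,
    card_filter_insert_of_notMem P hca, card_filter_insert_of_notMem P hcb,
    card_filter_insert_of_notMem P hc]
  by_cases hPc : P c
  · simp [hPc, hab hPc]
  · simp [hPc]

end CountDifference

lemma notMem_lowSet_union {n : ℕ} {i y : Fin n} {Xc : Finset (Fin n)} (hiy : i ≤ y)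
    (hy : y ∉ Xc) : y ∉ lowSet i ∪ Xc := by
  simp [lowSet, hiy, hy]

/-- The functional `χ_p^q` counts elements `< q` of a subset of `Fin n`: this is the
paper's "`≤ q`" in 1-based indexing. The sum runs over all subsets, which is harmless
since `v` is supported on proper nonempty ones. -/
theorem stmt_16_general (n : ℕ) (i j x : Fin n) (hij : i < j) (hjx : j < x)
    (Xc : Finset (Fin n)) (hXc : ∀ y ∈ Xc, (j : ℕ) + 2 ≤ (y : ℕ)) (hx : x ∉ Xc)
    (p q : ℕ) :
    ∑ S : Finset (Fin n),
      (if p ≤ (S.filter (fun y : Fin n => (y : ℕ) < q)).card then (1 : ℤ) else 0) *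
        ((if S = insert i (lowSet i ∪ Xc) then 1 else 0) -
          (if S = insert j (lowSet i ∪ Xc) then 1 else 0) -
          (if S = insert i (insert x (lowSet i ∪ Xc)) then 1 else 0) +
          (if S = insert j (insert x (lowSet i ∪ Xc)) then 1 else 0)) = 0 := by
  have hiXc : i ∉ Xc := fun h => by have := hXc i h; omega
  have hjXc : j ∉ Xc := fun h => by have := hXc j h; omega
  simp only [mul_sub, mul_add, sum_sub_distrib, sum_add_distrib, mul_ite, mul_one, mul_zero,
    sum_ite_eq', mem_univ, if_true]
  refine sub_sub_add_eq_zero_of_card_filter _ (fun k => if p ≤ k then 1 else 0)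
    (notMem_lowSet_union le_rfl hiXc) (notMem_lowSet_union hij.le hjXc)
    (notMem_lowSet_union (hij.trans hjx).le hx) (hij.trans hjx).ne hjx.ne fun hxq => ?_
  have : (i : ℕ) < j := hij
  have : (j : ℕ) < x := hjx
  constructor <;> intro <;> omega

/-- The functionals `χ_p^q` (with `(χ_p^q)_S = 1` iff `S` contains at least `p` indices
that are `≤ q`, in 1-based counting, i.e. at least `p` elements of value `< q` in
0-based counting) vanish on the vector
`v = e_{{1..i-1}∪{i}∪X} - e_{{1..i-1}∪{j}∪X} - e_{{1..i-1}∪{i,x}∪X} + e_{{1..i-1}∪{j,x}∪X}`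
for `i < j < x` and `X ⊂ {j+2,…,n} \ {x}`. The inner product is the standard one on the
coordinates indexed by proper nonempty subsets of `{1,…,n}`; since `v` is supported on
proper nonempty subsets, the sum may be taken over all subsets. -/
theorem stmt_16 (n : ℕ) (i j x : Fin n) (hij : i < j) (hjx : j < x)
    (Xc : Finset (Fin n)) (hXc : ∀ y ∈ Xc, (j : ℕ) + 2 ≤ (y : ℕ)) (hx : x ∉ Xc)
    (p q : ℕ) (hp : 1 ≤ p) (hpq : p ≤ q) (hq : q ≤ n) :
    ∑ S : Finset (Fin n),
      (if p ≤ (S.filter (fun y : Fin n => (y : ℕ) < q)).card then (1 : ℤ) else 0) *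
        ((if S = insert i (lowSet i ∪ Xc) then 1 else 0) -
          (if S = insert j (lowSet i ∪ Xc) then 1 else 0) -
          (if S = insert i (insert x (lowSet i ∪ Xc)) then 1 else 0) +
          (if S = insert j (insert x (lowSet i ∪ Xc)) then 1 else 0)) = 0 :=
  stmt_16_general n i j x hij hjx Xc hXc hx p q
end

section
/- Let H^s_γ for s ∈ Z^k_{≥0} denote polynomials J_γ^s(z) = Σ_{t ∈ Z^k} [(t+1)⋯(t+s) / (γ+tv)!] z^{γ+tv} (multi-index notation, terms with any negative exponent coordinate vanish), where v = (v¹,...,v^k) is a fixed tuple of lattice vectors and (t+1)⋯(t+s) = Π_α (t_α+1)⋯(t_α+s_α). Let O_α = ∂²/∂z^{v^α_+} - ∂²/∂z^{v^α_-} be the GKZ operator associated to v^α = v^α_+ - v^α_- (each of v^α_±, a sum of two distinct unit vectors). Then O_α J_γ^s = s_α · J_{γ - v^α_+}^{s - e_α}. -/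
/-!
Each `∂/∂z_X` sends `z^e / e!` to `z^(e - e_X) / (e - e_X)!` (both sides vanishing once an
exponent goes negative). Hence `∂²/∂z^{v^α_+} J_γ^s` is the same sum with exponents
`γ' + tv`, `γ' = γ - v^α_+`, while `∂²/∂z^{v^α_-} J_γ^s` has exponents
`γ - v^α_- + tv = γ' + (t + e_α)v`. After shifting `t`, the two coefficients differ only in
the `α`-factor, by `(t_α+1)⋯(t_α+s_α) - t_α⋯(t_α+s_α-1) = s_α (t_α+1)⋯(t_α+s_α-1)`.
-/

open MvPolynomial

/-- The exponent vector `γ + t·v = γ + t₁v¹ + … + t_k v^k`. -/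
def expVec {N k : ℕ} (v : Fin k → Fin N → ℤ) (γ : Fin N → ℤ) (t : Fin k → ℤ) :
    Fin N → ℤ :=
  fun i => γ i + ∑ α, t α * v α i

/-- The Horn-type polynomial
`J_γ^s(z) = Σ_{t ∈ ℤ^k} (t+1)⋯(t+s) z^{γ+tv}/(γ+tv)!` (multi-index notation; terms
whose exponent vector has a negative coordinate vanish). The hypothesis `hfin` says
that only finitely many `t` give exponent vectors with all coordinates nonnegative,
so the sum is finite. -/
noncomputable def Jpoly {N k : ℕ} (v : Fin k → Fin N → ℤ)
    (hfin : ∀ γ : Fin N → ℤ, {t : Fin k → ℤ | ∀ i, 0 ≤ expVec v γ t i}.Finite)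
    (γ : Fin N → ℤ) (s : Fin k → ℕ) : MvPolynomial (Fin N) ℚ :=
  ∑ t ∈ (hfin γ).toFinset,
    ((∏ α, ∏ m ∈ Finset.range (s α), ((t α : ℚ) + m + 1)) *
        ((∏ i, (expVec v γ t i).toNat.factorial : ℕ) : ℚ)⁻¹) •
      monomial (Finsupp.equivFunOnFinite.symm fun i => (expVec v γ t i).toNat) (1 : ℚ)

open Finset Nat

section MonomialDivFactorial

variable {K : Type*} [Field K] {σ : Type*} [Fintype σ]

variable (K) in
open scoped Classical in
/-- `z^e / e!`. -/
noncomputable def monomialDivFactorial (e : σ → ℤ) : MvPolynomial σ K :=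
  if 0 ≤ e then
    monomial (Finsupp.equivFunOnFinite.symm fun i => (e i).toNat)
      ((∏ i, (e i).toNat ! : ℕ) : K)⁻¹
  else 0

lemma monomialDivFactorial_of_not_nonneg {e : σ → ℤ} (he : ¬ 0 ≤ e) :
    monomialDivFactorial K e = 0 :=
  dif_neg he

lemma monomialDivFactorial_of_nonneg {e : σ → ℤ} (he : 0 ≤ e) :
    monomialDivFactorial K e = monomial (Finsupp.equivFunOnFinite.symm fun i => (e i).toNat)
      ((∏ i, (e i).toNat ! : ℕ) : K)⁻¹ :=
  dif_pos he

variable [DecidableEq σ]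

lemma prod_factorial_toNat_eq_mul {e : σ → ℤ} {X : σ} (hX : 0 < e X) :
    ∏ i, (e i).toNat ! = (e X).toNat * ∏ i, ((e - Pi.single X 1 : σ → ℤ) i).toNat ! := by
  have hcompl : ∀ i ∈ ({X}ᶜ : Finset σ),
      ((e - Pi.single X 1 : σ → ℤ) i).toNat ! = (e i).toNat ! := by
    intro i hi
    rw [Pi.sub_apply, Pi.single_eq_of_ne (by simpa using hi), sub_zero]
  rw [Fintype.prod_eq_mul_prod_compl X, Fintype.prod_eq_mul_prod_compl X, prod_congr rfl hcompl,
    ← mul_assoc, Pi.sub_apply, Pi.single_eq_same, show (e X - 1).toNat = (e X).toNat - 1 by omega,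
    Nat.mul_factorial_pred (by omega)]

theorem pderiv_monomialDivFactorial [CharZero K] (X : σ) (e : σ → ℤ) :
    pderiv X (monomialDivFactorial K e) = monomialDivFactorial K (e - Pi.single X 1) := by
  by_cases he : 0 ≤ e
  swap
  · have : ¬ 0 ≤ e - Pi.single X 1 := fun h =>
      he (h.trans (sub_le_self _ (Pi.single_nonneg.2 zero_le_one)))
    rw [monomialDivFactorial_of_not_nonneg he, monomialDivFactorial_of_not_nonneg this, map_zero]
  rcases (show 0 ≤ e X from he X).eq_or_lt with hX | hX
  · have : ¬ 0 ≤ e - Pi.single X 1 := fun h => by simpa [← hX] using h X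
    rw [monomialDivFactorial_of_not_nonneg this, monomialDivFactorial_of_nonneg he,
      pderiv_monomial]
    simp [← hX]
  · have he' : 0 ≤ e - Pi.single X 1 := fun i => by
      by_cases hi : i = X
      · subst hi
        simp only [Pi.zero_apply, Pi.sub_apply, Pi.single_eq_same, Int.sub_nonneg]
        omega
      · simpa [Pi.single_eq_of_ne hi] using he i
    have hexp : (Finsupp.equivFunOnFinite.symm fun i => (e i).toNat) - Finsupp.single X 1 =
        Finsupp.equivFunOnFinite.symm fun i => ((e - Pi.single X 1 : σ → ℤ) i).toNat := by
      ext i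
      by_cases hi : i = X
      · subst hi; simp
      · simp [Finsupp.single_eq_of_ne hi, Pi.single_eq_of_ne hi]
    have hX' : ((e X).toNat : K) ≠ 0 := by norm_cast; omega
    rw [monomialDivFactorial_of_nonneg he, monomialDivFactorial_of_nonneg he', pderiv_monomial,
      hexp, prod_factorial_toNat_eq_mul hX, Nat.cast_mul, mul_inv, mul_comm, ← mul_assoc]
    simp [hX']

end MonomialDivFactorial

section RisingProd

variable {ι : Type*} [Fintype ι]

def risingProd (s : ι → ℕ) (t : ι → ℤ) : ℚ :=
  ∏ α, ∏ m ∈ range (s α), ((t α : ℚ) + m + 1)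

lemma prod_range_sub_prod_range_sub_one {R : Type*} [CommRing R] (x : R) (n : ℕ) :
    ∏ m ∈ range n, (x + m + 1) - ∏ m ∈ range n, (x - 1 + m + 1) =
      n * ∏ m ∈ range (n - 1), (x + m + 1) := by
  cases n with
  | zero => simp
  | succ n =>
    have hshift : ∀ m ∈ range n, x - 1 + ((m + 1 : ℕ) : R) + 1 = x + m + 1 := by
      intro m _; push_cast; ring
    rw [prod_range_succ, prod_range_succ', prod_congr rfl hshift, Nat.add_sub_cancel]
    push_cast
    ring

lemma risingProd_sub_risingProd_sub_single [DecidableEq ι] (s : ι → ℕ) (t : ι → ℤ) (α : ι) :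
    risingProd s t - risingProd s (t - Pi.single α 1) =
      s α * risingProd (Function.update s α (s α - 1)) t := by
  have hrest : ∀ β ∈ ({α}ᶜ : Finset ι),
      ∏ m ∈ range (s β), ((((t - Pi.single α 1 : ι → ℤ) β : ℤ) : ℚ) + m + 1) =
        ∏ m ∈ range (Function.update s α (s α - 1) β), ((t β : ℚ) + m + 1) := by
    intro β hβ
    have hβα : β ≠ α := by simpa using hβ
    rw [Pi.sub_apply, Pi.single_eq_of_ne hβα, sub_zero, Function.update_of_ne hβα]
  have hrest' : ∀ β ∈ ({α}ᶜ : Finset ι),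
      ∏ m ∈ range (s β), ((t β : ℚ) + m + 1) =
        ∏ m ∈ range (Function.update s α (s α - 1) β), ((t β : ℚ) + m + 1) := by
    intro β hβ
    rw [Function.update_of_ne (by simpa using hβ)]
  simp only [risingProd]
  rw [Fintype.prod_eq_mul_prod_compl α, Fintype.prod_eq_mul_prod_compl α,
    Fintype.prod_eq_mul_prod_compl α, prod_congr rfl hrest, prod_congr rfl hrest']
  simp only [Pi.sub_apply, Pi.single_eq_same, Function.update_self, Int.cast_sub, Int.cast_one]
  linear_combination (∏ β ∈ ({α}ᶜ : Finset ι),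
    ∏ m ∈ range (Function.update s α (s α - 1) β), ((t β : ℚ) + m + 1)) *
      prod_range_sub_prod_range_sub_one (t α : ℚ) (s α)

end RisingProd

section Jpoly

variable {N k : ℕ} (v : Fin k → Fin N → ℤ)

lemma expVec_add_left (γ δ : Fin N → ℤ) (t : Fin k → ℤ) :
    expVec v (γ + δ) t = expVec v γ t + δ := by
  ext i
  simp only [expVec, Pi.add_apply]
  ring

lemma expVec_add_single (γ : Fin N → ℤ) (t : Fin k → ℤ) (α : Fin k) :
    expVec v γ (t + Pi.single α 1) = expVec v γ t + v α := by
  ext i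
  simp [expVec, add_mul, sum_add_distrib, Pi.single_apply, add_assoc]

lemma expVec_mono {γ δ : Fin N → ℤ} (h : γ ≤ δ) (t : Fin k → ℤ) :
    expVec v γ t ≤ expVec v δ t := fun i => by
  simp only [expVec]
  linarith [h i]

variable (hfin : ∀ γ : Fin N → ℤ, {t : Fin k → ℤ | ∀ i, 0 ≤ expVec v γ t i}.Finite)

lemma mem_toFinset_iff_nonneg {γ : Fin N → ℤ} {t : Fin k → ℤ} :
    t ∈ (hfin γ).toFinset ↔ 0 ≤ expVec v γ t :=
  Set.Finite.mem_toFinset _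

lemma toFinset_subset_toFinset_of_le {γ δ : Fin N → ℤ} (h : γ ≤ δ) :
    (hfin γ).toFinset ⊆ (hfin δ).toFinset := fun t ht =>
  (mem_toFinset_iff_nonneg v hfin).2
    (((mem_toFinset_iff_nonneg v hfin).1 ht).trans (expVec_mono v h t))

lemma sum_smul_monomialDivFactorial_of_subset (c : (Fin k → ℤ) → ℚ) {γ : Fin N → ℤ}
    {T : Finset (Fin k → ℤ)} (hT : (hfin γ).toFinset ⊆ T) :
    ∑ t ∈ T, c t • monomialDivFactorial ℚ (expVec v γ t) =
      ∑ t ∈ (hfin γ).toFinset, c t • monomialDivFactorial ℚ (expVec v γ t) := by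
  refine (sum_subset hT fun t _ ht => ?_).symm
  rw [monomialDivFactorial_of_not_nonneg (mt (mem_toFinset_iff_nonneg v hfin).2 ht), smul_zero]

lemma sum_smul_monomialDivFactorial_add_single (c : (Fin k → ℤ) → ℚ) {γ δ : Fin N → ℤ}
    (α : Fin k) (h : δ + v α ≤ γ) :
    ∑ t ∈ (hfin γ).toFinset, c t • monomialDivFactorial ℚ (expVec v δ (t + Pi.single α 1)) =
      ∑ t ∈ (hfin δ).toFinset, c (t - Pi.single α 1) • monomialDivFactorial ℚ (expVec v δ t) := by
  have hshift :
      (hfin δ).toFinset ⊆ (hfin γ).toFinset.map (addRightEmbedding (Pi.single α 1)) := by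
    intro t ht
    refine mem_map.2 ⟨t - Pi.single α 1, ?_, sub_add_cancel t _⟩
    rw [mem_toFinset_iff_nonneg] at ht ⊢
    calc 0 ≤ expVec v δ t := ht
      _ = expVec v (δ + v α) (t - Pi.single α 1) := by
        rw [expVec_add_left, ← expVec_add_single, sub_add_cancel]
      _ ≤ expVec v γ (t - Pi.single α 1) := expVec_mono v h _
  rw [← sum_smul_monomialDivFactorial_of_subset v hfin _ hshift, sum_map]
  simp only [addRightEmbedding_apply, add_sub_cancel_right]

lemma Jpoly_eq_sum (γ : Fin N → ℤ) (s : Fin k → ℕ) :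
    Jpoly v hfin γ s =
      ∑ t ∈ (hfin γ).toFinset, risingProd s t • monomialDivFactorial ℚ (expVec v γ t) := by
  refine sum_congr rfl fun t ht => ?_
  rw [monomialDivFactorial_of_nonneg ((mem_toFinset_iff_nonneg v hfin).1 ht), smul_monomial,
    smul_monomial, smul_eq_mul, smul_eq_mul, mul_one]
  rfl

lemma pderiv_pderiv_Jpoly (X Y : Fin N) (γ : Fin N → ℤ) (s : Fin k → ℕ) :
    pderiv X (pderiv Y (Jpoly v hfin γ s)) =
      ∑ t ∈ (hfin γ).toFinset, risingProd s t •
        monomialDivFactorial ℚ (expVec v γ t - Pi.single Y 1 - Pi.single X 1) := by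
  simp only [Jpoly_eq_sum, map_sum, Derivation.map_smul, pderiv_monomialDivFactorial]

end Jpoly

theorem stmt_17_general {N k : ℕ} (v : Fin k → Fin N → ℤ) (A B C D : Fin k → Fin N)
    (hv : ∀ α i, v α i =
      ((if i = A α then 1 else 0) + (if i = B α then 1 else 0) -
        (if i = C α then 1 else 0) - (if i = D α then 1 else 0)))
    (hfin : ∀ γ : Fin N → ℤ, {t : Fin k → ℤ | ∀ i, 0 ≤ expVec v γ t i}.Finite)
    (γ : Fin N → ℤ) (s : Fin k → ℕ) (α : Fin k) :
    pderiv (A α) (pderiv (B α) (Jpoly v hfin γ s)) -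
        pderiv (C α) (pderiv (D α) (Jpoly v hfin γ s)) =
      (s α : ℚ) •
        Jpoly v hfin
          (fun i => γ i - ((if i = A α then 1 else 0) + (if i = B α then 1 else 0)))
          (Function.update s α (s α - 1)) := by
  set γ' : Fin N → ℤ := fun i => γ i - ((if i = A α then 1 else 0) + (if i = B α then 1 else 0))
  have hsingle (X : Fin N) : (0 : Fin N → ℤ) ≤ Pi.single X 1 := Pi.single_nonneg.2 zero_le_one
  have hγ : γ = γ' + (Pi.single (A α) 1 + Pi.single (B α) 1) := by
    ext i; simp [γ', Pi.single_apply]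
  have hvα : v α =
      Pi.single (A α) 1 + Pi.single (B α) 1 - Pi.single (C α) 1 - Pi.single (D α) 1 := by
    ext i; simp [hv, Pi.single_apply]
  have hle : γ' ≤ γ := by
    rw [hγ]; exact le_add_of_nonneg_right (add_nonneg (hsingle _) (hsingle _))
  have hle' : γ' + v α ≤ γ := by
    rw [hvα, hγ]
    exact add_le_add_right ((sub_le_self _ (hsingle _)).trans (sub_le_self _ (hsingle _))) γ'
  have hplus (t : Fin k → ℤ) :
      expVec v γ t - Pi.single (B α) 1 - Pi.single (A α) 1 = expVec v γ' t := by
    rw [hγ, expVec_add_left]; abel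
  have hminus (t : Fin k → ℤ) : expVec v γ t - Pi.single (D α) 1 - Pi.single (C α) 1 =
      expVec v γ' (t + Pi.single α 1) := by
    rw [expVec_add_single, hvα, hγ, expVec_add_left]; abel
  simp only [pderiv_pderiv_Jpoly, hplus, hminus]
  rw [sum_smul_monomialDivFactorial_of_subset v hfin _
      (toFinset_subset_toFinset_of_le v hfin hle),
    sum_smul_monomialDivFactorial_add_single v hfin _ α hle', Jpoly_eq_sum, smul_sum,
    ← sum_sub_distrib]
  refine sum_congr rfl fun t _ => ?_
  rw [← sub_smul, risingProd_sub_risingProd_sub_single, mul_smul]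

/-- For lattice vectors `v^α = v^α_+ - v^α_-` with `v^α_+ = e_{Aα} + e_{Bα}` and
`v^α_- = e_{Cα} + e_{Dα}` (sums of two distinct unit vectors), the GKZ operator
`O_α = ∂²/∂z^{v^α_+} - ∂²/∂z^{v^α_-}` acts on the Horn-type polynomials by
`O_α J_γ^s = s_α · J_{γ - v^α_+}^{s - e_α}`. -/
theorem stmt_17 {N k : ℕ} (v : Fin k → Fin N → ℤ) (A B C D : Fin k → Fin N)
    (hAB : ∀ α, A α ≠ B α) (hCD : ∀ α, C α ≠ D α)
    (hv : ∀ α i, v α i =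
      ((if i = A α then 1 else 0) + (if i = B α then 1 else 0) -
        (if i = C α then 1 else 0) - (if i = D α then 1 else 0)))
    (hfin : ∀ γ : Fin N → ℤ, {t : Fin k → ℤ | ∀ i, 0 ≤ expVec v γ t i}.Finite)
    (γ : Fin N → ℤ) (s : Fin k → ℕ) (α : Fin k) :
    pderiv (A α) (pderiv (B α) (Jpoly v hfin γ s)) -
        pderiv (C α) (pderiv (D α) (Jpoly v hfin γ s)) =
      (s α : ℚ) •
        Jpoly v hfin
          (fun i => γ i - ((if i = A α then 1 else 0) + (if i = B α then 1 else 0)))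
          (Function.update s α (s α - 1)) :=
  stmt_17_general v A B C D hv hfin γ s α
end
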